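/- Let γ > 0 and let C_Π, K_σ, K_α, C_σ, C_α ≥ 0 be constants. Let α : ℝ^d → ℝ^d and σ : ℝ^d → ℝ^{m×d} satisfy, for all φ, φ₁, φ₂ ∈ ℝ^d and all π ∈ ℝ^m: ‖α(φ)‖ ≤ K_α, ‖α(φ₁) − α(φ₂)‖ ≤ C_α‖φ₁ − φ₂‖, ‖σ(φ)ᵀπ‖ ≤ K_σ‖π‖, and ‖(σ(φ₁) − σ(φ₂))ᵀπ‖ ≤ C_σ‖φ₁ − φ₂‖·‖π‖. Define F̂₁(π, z, φ) := (γ/2)‖σ(φ)ᵀπ − (z + α(φ)/γ)‖² − α(φ)·z − ‖α(φ)‖²/(2γ). Then there exists a constant C_φ > 0, depending only on γ, C_Π, K_σ, K_α, C_σ and C_α, such that for every π ∈ ℝ^m with ‖π‖ ≤ C_Π and all z, φ₁, φ₂ ∈ ℝ^d: |F̂₁(π, z, φ₁) − F̂₁(π, z, φ₂)| ≤ C_φ (1 + ‖z‖) ‖φ₁ − φ₂‖. -/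

import Mathlib

local notation "⟪" x ", " y "⟫" => @inner ℝ _ _ x y

lemma sq_norm_diff_eq {d : ℕ} (a b : EuclideanSpace ℝ (Fin d)) :
    ‖a‖ ^ 2 - ‖b‖ ^ 2 = ⟪a - b, a + b⟫ := by
  rw [inner_sub_left, inner_add_right, inner_add_right,
    real_inner_self_eq_norm_sq, real_inner_self_eq_norm_sq, real_inner_comm b a]
  ring

private lemma key_ineq (γ q1 q2 Cα Kα D Z : ℝ) (hγ : 0 < γ) (hγi : 0 ≤ γ⁻¹)
    (hq1 : 0 ≤ q1) (hq2 : 0 ≤ q2) (hCα : 0 ≤ Cα) (hKα : 0 ≤ Kα)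
    (hD : 0 ≤ D) (hZ : 0 ≤ Z) :
    γ / 2 * ((q1 * D) * (2 * (q2 + Z))) + Cα * D * Z
      + ((Cα * D) * (2 * Kα)) / (2 * γ)
      ≤ (γ * q1 * (q2 + 1) + Cα + Cα * Kα * γ⁻¹ + 1) * (1 + Z) * D := by
  have hdiv : ((Cα * D) * (2 * Kα)) / (2 * γ) = Cα * Kα * γ⁻¹ * D := by
    field_simp
  rw [hdiv]
  nlinarith [mul_nonneg (mul_nonneg hγ.le hq1) (mul_nonneg hq2 hZ),
    mul_nonneg (mul_nonneg hγ.le hq1) hD,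
    mul_nonneg (mul_nonneg hCα hZ) hD,
    mul_nonneg (mul_nonneg (mul_nonneg hCα hKα) hγi) (mul_nonneg hZ hD),
    mul_nonneg (mul_nonneg (mul_nonneg hγ.le hq1) (mul_nonneg hq2 hZ)) hD,
    mul_nonneg hZ hD]

/-- The quadratic part of the Hamiltonian in the stochastic factor model:
`F̂₁(π, z, φ) = (γ/2)‖σ(φ)ᵀπ − (z + α(φ)/γ)‖² − α(φ)·z − ‖α(φ)‖²/(2γ)`. -/
noncomputable def F1hat {m d : ℕ} (γ : ℝ)
    (α : EuclideanSpace ℝ (Fin d) → EuclideanSpace ℝ (Fin d))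
    (σ : EuclideanSpace ℝ (Fin d) → Matrix (Fin m) (Fin d) ℝ)
    (π : EuclideanSpace ℝ (Fin m)) (z φ : EuclideanSpace ℝ (Fin d)) : ℝ :=
  γ / 2 * ‖Matrix.toEuclideanLin (σ φ).transpose π - (z + γ⁻¹ • α φ)‖ ^ 2
    - ⟪α φ, z⟫ - ‖α φ‖ ^ 2 / (2 * γ)

/-- **Local Lipschitz continuity of the factor-model driver in the factor variable**:
there is a constant `C_φ > 0`, depending only on `γ, C_Π, K_σ, K_α, C_σ, C_α`, such that
for bounded Lipschitz coefficients `α, σ` and any strategy `π` with `‖π‖ ≤ C_Π`,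
`|F̂₁(π,z,φ₁) − F̂₁(π,z,φ₂)| ≤ C_φ (1 + ‖z‖) ‖φ₁ − φ₂‖`. -/
theorem F1hat_lipschitz_in_factor (γ CPi Kσ Kα Cσ Cα : ℝ) (hγ : 0 < γ)
    (hCPi : 0 ≤ CPi) (hKσ : 0 ≤ Kσ) (hKα : 0 ≤ Kα) (hCσ : 0 ≤ Cσ) (hCα : 0 ≤ Cα) :
    ∃ Cφ : ℝ, 0 < Cφ ∧
      ∀ (m d : ℕ)
        (α : EuclideanSpace ℝ (Fin d) → EuclideanSpace ℝ (Fin d))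
        (σ : EuclideanSpace ℝ (Fin d) → Matrix (Fin m) (Fin d) ℝ),
        (∀ φ, ‖α φ‖ ≤ Kα) →
        (∀ φ₁ φ₂, ‖α φ₁ - α φ₂‖ ≤ Cα * ‖φ₁ - φ₂‖) →
        (∀ φ (π : EuclideanSpace ℝ (Fin m)),
          ‖Matrix.toEuclideanLin (σ φ).transpose π‖ ≤ Kσ * ‖π‖) →
        (∀ φ₁ φ₂ (π : EuclideanSpace ℝ (Fin m)),
          ‖Matrix.toEuclideanLin (σ φ₁ - σ φ₂).transpose π‖ ≤ Cσ * ‖φ₁ - φ₂‖ * ‖π‖) →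
        ∀ π : EuclideanSpace ℝ (Fin m), ‖π‖ ≤ CPi →
        ∀ z φ₁ φ₂ : EuclideanSpace ℝ (Fin d),
          |F1hat γ α σ π z φ₁ - F1hat γ α σ π z φ₂| ≤ Cφ * (1 + ‖z‖) * ‖φ₁ - φ₂‖ := by
  set q1 : ℝ := Cσ * CPi + γ⁻¹ * Cα with hq1
  set q2 : ℝ := Kσ * CPi + γ⁻¹ * Kα with hq2
  have hγi : 0 ≤ γ⁻¹ := le_of_lt (inv_pos.mpr hγ)
  have hq1n : 0 ≤ q1 := by positivity
  have hq2n : 0 ≤ q2 := by positivity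
  refine ⟨γ * q1 * (q2 + 1) + Cα + Cα * Kα * γ⁻¹ + 1, by positivity, ?_⟩
  intro m d α σ hαb hαl hσb hσl π hπ z φ₁ φ₂
  set D := ‖φ₁ - φ₂‖ with hD
  set Z := ‖z‖ with hZ
  have hDn : 0 ≤ D := norm_nonneg _
  have hZn : 0 ≤ Z := norm_nonneg _
  set a : EuclideanSpace ℝ (Fin d) :=
    Matrix.toEuclideanLin (σ φ₁).transpose π - (z + γ⁻¹ • α φ₁) with ha
  set b : EuclideanSpace ℝ (Fin d) :=
    Matrix.toEuclideanLin (σ φ₂).transpose π - (z + γ⁻¹ • α φ₂) with hb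
  -- bound on ‖a - b‖
  have hT : Matrix.toEuclideanLin (σ φ₁ - σ φ₂).transpose π =
      Matrix.toEuclideanLin (σ φ₁).transpose π - Matrix.toEuclideanLin (σ φ₂).transpose π := by
    rw [Matrix.transpose_sub, map_sub, LinearMap.sub_apply]
  have hab : ‖a - b‖ ≤ q1 * D := by
    have h1 : a - b = Matrix.toEuclideanLin (σ φ₁ - σ φ₂).transpose π
        - γ⁻¹ • (α φ₁ - α φ₂) := by
      rw [hT, ha, hb, smul_sub]; abel
    rw [h1]
    calc ‖Matrix.toEuclideanLin (σ φ₁ - σ φ₂).transpose π - γ⁻¹ • (α φ₁ - α φ₂)‖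
        ≤ ‖Matrix.toEuclideanLin (σ φ₁ - σ φ₂).transpose π‖ + ‖γ⁻¹ • (α φ₁ - α φ₂)‖ :=
          norm_sub_le _ _
      _ ≤ Cσ * D * CPi + γ⁻¹ * (Cα * D) := by
          gcongr
          · refine le_trans (hσl φ₁ φ₂ π) ?_
            rw [← hD]
            exact mul_le_mul_of_nonneg_left hπ (by positivity)
          · rw [norm_smul, Real.norm_eq_abs, abs_of_nonneg hγi]
            gcongr
            exact hαl φ₁ φ₂
      _ = q1 * D := by rw [hq1]; ring
  have hnorm : ∀ (φ : EuclideanSpace ℝ (Fin d)),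
      ‖Matrix.toEuclideanLin (σ φ).transpose π - (z + γ⁻¹ • α φ)‖ ≤ q2 + Z := by
    intro φ
    calc ‖Matrix.toEuclideanLin (σ φ).transpose π - (z + γ⁻¹ • α φ)‖
        ≤ ‖Matrix.toEuclideanLin (σ φ).transpose π‖ + (‖z‖ + ‖γ⁻¹ • α φ‖) :=
          le_trans (norm_sub_le _ _) (by gcongr; exact norm_add_le _ _)
      _ ≤ Kσ * CPi + (Z + γ⁻¹ * Kα) := by
          gcongr
          · exact le_trans (hσb φ π) (mul_le_mul_of_nonneg_left hπ hKσ)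
          · rw [norm_smul, Real.norm_eq_abs, abs_of_nonneg hγi]
            gcongr; exact hαb φ
      _ = q2 + Z := by rw [hq2]; ring
  have habp : ‖a + b‖ ≤ 2 * (q2 + Z) := by
    calc ‖a + b‖ ≤ ‖a‖ + ‖b‖ := norm_add_le _ _
      _ ≤ (q2 + Z) + (q2 + Z) := add_le_add (hnorm φ₁) (hnorm φ₂)
      _ = 2 * (q2 + Z) := by ring
  have h1 : |‖a‖ ^ 2 - ‖b‖ ^ 2| ≤ (q1 * D) * (2 * (q2 + Z)) := by
    rw [sq_norm_diff_eq]
    calc |⟪a - b, a + b⟫| ≤ ‖a - b‖ * ‖a + b‖ := abs_real_inner_le_norm _ _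
      _ ≤ (q1 * D) * (2 * (q2 + Z)) := by
          apply mul_le_mul hab habp (norm_nonneg _) (by positivity)
  have h2 : |⟪α φ₁, z⟫ - ⟪α φ₂, z⟫| ≤ Cα * D * Z := by
    rw [← inner_sub_left]
    calc |⟪α φ₁ - α φ₂, z⟫| ≤ ‖α φ₁ - α φ₂‖ * ‖z‖ := abs_real_inner_le_norm _ _
      _ ≤ Cα * D * Z := by
          apply mul_le_mul_of_nonneg_right (hαl φ₁ φ₂) hZn
  have h3 : |‖α φ₁‖ ^ 2 - ‖α φ₂‖ ^ 2| ≤ (Cα * D) * (2 * Kα) := by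
    rw [sq_norm_diff_eq]
    calc |⟪α φ₁ - α φ₂, α φ₁ + α φ₂⟫| ≤ ‖α φ₁ - α φ₂‖ * ‖α φ₁ + α φ₂‖ :=
          abs_real_inner_le_norm _ _
      _ ≤ (Cα * D) * (2 * Kα) := by
          apply mul_le_mul (hαl φ₁ φ₂) ?_ (norm_nonneg _) (by positivity)
          calc ‖α φ₁ + α φ₂‖ ≤ ‖α φ₁‖ + ‖α φ₂‖ := norm_add_le _ _
            _ ≤ Kα + Kα := add_le_add (hαb φ₁) (hαb φ₂)
            _ = 2 * Kα := by ring
  have hdiff : F1hat γ α σ π z φ₁ - F1hat γ α σ π z φ₂ =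
      γ / 2 * (‖a‖ ^ 2 - ‖b‖ ^ 2) - (⟪α φ₁, z⟫ - ⟪α φ₂, z⟫)
        - (‖α φ₁‖ ^ 2 - ‖α φ₂‖ ^ 2) / (2 * γ) := by
    rw [F1hat, F1hat, ha, hb]; ring
  rw [hdiff]
  have hsplit : |γ / 2 * (‖a‖ ^ 2 - ‖b‖ ^ 2) - (⟪α φ₁, z⟫ - ⟪α φ₂, z⟫)
        - (‖α φ₁‖ ^ 2 - ‖α φ₂‖ ^ 2) / (2 * γ)|
      ≤ γ / 2 * |‖a‖ ^ 2 - ‖b‖ ^ 2| + |⟪α φ₁, z⟫ - ⟪α φ₂, z⟫|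
        + |‖α φ₁‖ ^ 2 - ‖α φ₂‖ ^ 2| / (2 * γ) := by
    calc |γ / 2 * (‖a‖ ^ 2 - ‖b‖ ^ 2) - (⟪α φ₁, z⟫ - ⟪α φ₂, z⟫)
          - (‖α φ₁‖ ^ 2 - ‖α φ₂‖ ^ 2) / (2 * γ)|
        ≤ |γ / 2 * (‖a‖ ^ 2 - ‖b‖ ^ 2) - (⟪α φ₁, z⟫ - ⟪α φ₂, z⟫)|
          + |(‖α φ₁‖ ^ 2 - ‖α φ₂‖ ^ 2) / (2 * γ)| := abs_sub _ _
      _ ≤ |γ / 2 * (‖a‖ ^ 2 - ‖b‖ ^ 2)| + |⟪α φ₁, z⟫ - ⟪α φ₂, z⟫|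
          + |(‖α φ₁‖ ^ 2 - ‖α φ₂‖ ^ 2) / (2 * γ)| := by gcongr; exact abs_sub _ _
      _ = γ / 2 * |‖a‖ ^ 2 - ‖b‖ ^ 2| + |⟪α φ₁, z⟫ - ⟪α φ₂, z⟫|
          + |‖α φ₁‖ ^ 2 - ‖α φ₂‖ ^ 2| / (2 * γ) := by
          have e1 : |γ / 2 * (‖a‖ ^ 2 - ‖b‖ ^ 2)| = γ / 2 * |‖a‖ ^ 2 - ‖b‖ ^ 2| := by
            rw [abs_mul, abs_of_nonneg (by positivity : (0:ℝ) ≤ γ / 2)]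
          have e2 : |(‖α φ₁‖ ^ 2 - ‖α φ₂‖ ^ 2) / (2 * γ)|
              = |‖α φ₁‖ ^ 2 - ‖α φ₂‖ ^ 2| / (2 * γ) := by
            rw [abs_div, abs_of_nonneg (by positivity : (0:ℝ) ≤ 2 * γ)]
          rw [e1, e2]
  refine le_trans hsplit ?_
  have hkey := key_ineq γ q1 q2 Cα Kα D Z hγ hγi hq1n hq2n hCα hKα hDn hZn
  refine le_trans ?_ hkey
  have t1 : γ / 2 * |‖a‖ ^ 2 - ‖b‖ ^ 2| ≤ γ / 2 * ((q1 * D) * (2 * (q2 + Z))) :=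
    mul_le_mul_of_nonneg_left h1 (by positivity)
  have t3 : |‖α φ₁‖ ^ 2 - ‖α φ₂‖ ^ 2| / (2 * γ) ≤ ((Cα * D) * (2 * Kα)) / (2 * γ) := by
    rw [div_eq_mul_inv, div_eq_mul_inv]
    exact mul_le_mul_of_nonneg_right h3 (by positivity)
  linarith [t1, h2, t3]
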